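/- arXiv:2506.05980 — 2 statements merged into one kernel-verified Lean document; each statement's English description precedes it below -/
import Mathlib

section
/- (Bretagnolle–Huber–Carol inequality) Let $X = (X_1,\dots,X_k)$ be multinomially distributed with $n$ trials and probabilities $p = (p_1,\dots,p_k)$. Then for every $\lambda > 0$, $\Pr\left[\sum_{i=1}^k |X_i - n p_i| \ge 2\lambda\sqrt{n}\right] \le 2^k e^{-2\lambda^2}$. -/
open scoped BigOperators

attribute [local instance] Classical.propDecidable


lemma hoeff_pt (q s : ℝ) (hq0 : 0 ≤ q) (hq1 : q ≤ 1) (hs : 0 ≤ s) :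
    1 - q + q * Real.exp s ≤ Real.exp (q * s + s ^ 2 / 8) := by
  set D : ℝ → ℝ := fun x => 1 - q + q * Real.exp x with hD
  have hDpos : ∀ x, 0 < D x := by
    intro x
    rcases eq_or_lt_of_le hq0 with h | h
    · simp [hD, ← h]
    · have h2 : 0 < q * Real.exp x := by positivity
      show 0 < 1 - q + q * Real.exp x
      nlinarith
  have hDderiv : ∀ x, HasDerivAt D (q * Real.exp x) x := by
    intro x
    exact ((Real.hasDerivAt_exp x).const_mul q).const_add (1 - q)
  set h : ℝ → ℝ := fun x => q + x / 4 - q * Real.exp x / D x with hh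
  set g : ℝ → ℝ := fun x => q * x + x ^ 2 / 8 - Real.log (D x) with hg
  have hgderiv : ∀ x, HasDerivAt g (h x) x := by
    intro x
    have h1 : HasDerivAt (fun x => q * x + x ^ 2 / 8) (q + x / 4) x := by
      have := ((hasDerivAt_pow 2 x).div_const 8).const_add (q * x)
      have h2 : HasDerivAt (fun y => q * y) q x := by
        simpa using (hasDerivAt_id x).const_mul q
      have := h2.add ((hasDerivAt_pow 2 x).div_const 8)
      exact this.congr_deriv (by rw [show (2:ℕ) - 1 = 1 from rfl]; push_cast; ring)
    have h3 : HasDerivAt (fun x => Real.log (D x)) (q * Real.exp x / D x) x :=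
      (hDderiv x).log (hDpos x).ne'
    exact h1.sub h3
  have hhderiv : ∀ x, HasDerivAt h (1 / 4 - q * Real.exp x * (1 - q) / (D x) ^ 2) x := by
    intro x
    have h1 : HasDerivAt (fun x => q + x / 4) (1 / 4) x := by
      simpa using ((hasDerivAt_id x).div_const 4).const_add q
    have h2 : HasDerivAt (fun x => q * Real.exp x) (q * Real.exp x) x :=
      (Real.hasDerivAt_exp x).const_mul q
    have h3 := h2.div (hDderiv x) (hDpos x).ne'
    have h4 : (q * Real.exp x * D x - q * Real.exp x * (q * Real.exp x)) / D x ^ 2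
        = q * Real.exp x * (1 - q) / (D x) ^ 2 := by
      congr 1
      simp only [hD]
      ring
    rw [h4] at h3
    exact h1.sub h3
  have hhmono : MonotoneOn h (Set.Ici 0) := by
    apply monotoneOn_of_deriv_nonneg (convex_Ici 0)
    · exact fun x _ => (hhderiv x).continuousAt.continuousWithinAt
    · exact fun x _ => (hhderiv x).differentiableAt.differentiableWithinAt
    · intro x _
      rw [(hhderiv x).deriv]
      have hD2 : 0 < (D x) ^ 2 := pow_pos (hDpos x) 2
      rw [sub_nonneg, div_le_iff₀ hD2]
      have : (1 - q - q * Real.exp x) ^ 2 ≥ 0 := sq_nonneg _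
      have hDx : D x = 1 - q + q * Real.exp x := rfl
      nlinarith [sq_nonneg (1 - q - q * Real.exp x)]
  have hh0 : h 0 = 0 := by
    simp [hh, hD]
  have hhnn : ∀ x ∈ Set.Ici (0:ℝ), 0 ≤ h x := by
    intro x hx
    have := hhmono (Set.self_mem_Ici) hx hx
    rw [hh0] at this
    exact this
  have hgmono : MonotoneOn g (Set.Ici 0) := by
    apply monotoneOn_of_deriv_nonneg (convex_Ici 0)
    · exact fun x _ => (hgderiv x).continuousAt.continuousWithinAt
    · exact fun x _ => (hgderiv x).differentiableAt.differentiableWithinAt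
    · intro x hx
      rw [(hgderiv x).deriv]
      exact hhnn x (le_of_lt (by simpa using hx))
  have hg0 : g 0 = 0 := by
    simp [hg, hD]
  have hgs : 0 ≤ g s := by
    have := hgmono (Set.self_mem_Ici) hs hs
    rwa [hg0] at this
  have : Real.log (D s) ≤ q * s + s ^ 2 / 8 := by
    simp only [hg] at hgs; linarith
  calc 1 - q + q * Real.exp s = D s := rfl
    _ ≤ Real.exp (q * s + s ^ 2 / 8) := by
        rw [← Real.exp_log (hDpos s)]
        exact Real.exp_le_exp.mpr this


lemma chernoff_core (n : ℕ) (hn : 0 < n) (lam q : ℝ) (hlam : 0 < lam)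
    (hq0 : 0 ≤ q) (hq1 : q ≤ 1)
    {ι : Type*} [Fintype ι] (w : ι → ℝ) (hw : ∀ ω, 0 ≤ w ω)
    (Y : ι → ℝ)
    (hmgf : ∀ s : ℝ, ∑ ω, Real.exp (s * Y ω) * w ω = (1 - q + q * Real.exp s) ^ n)
    (S : Finset ι) (hS : ∀ ω ∈ S, (n : ℝ) * q + lam * Real.sqrt n ≤ Y ω) :
    ∑ ω ∈ S, w ω ≤ Real.exp (-2 * lam ^ 2) := by
  have hnn : (0:ℝ) < n := by exact_mod_cast hn
  have hsqrt : 0 < Real.sqrt n := Real.sqrt_pos.mpr hnn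
  set s : ℝ := 4 * lam / Real.sqrt n with hs_def
  have hs0 : 0 ≤ s := by positivity
  set a : ℝ := (n : ℝ) * q + lam * Real.sqrt n with ha_def
  have key : ∀ ω ∈ S, w ω ≤ Real.exp (-(s * a)) * (Real.exp (s * Y ω) * w ω) := by
    intro ω hω
    have h1 : Real.exp (s * a) * w ω ≤ Real.exp (s * Y ω) * w ω :=
      mul_le_mul_of_nonneg_right
        (Real.exp_le_exp.mpr (mul_le_mul_of_nonneg_left (hS ω hω) hs0)) (hw ω)
    have h2 : w ω = Real.exp (-(s * a)) * (Real.exp (s * a) * w ω) := by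
      rw [← mul_assoc, ← Real.exp_add]; simp
    calc w ω = Real.exp (-(s * a)) * (Real.exp (s * a) * w ω) := h2
      _ ≤ _ := mul_le_mul_of_nonneg_left h1 (Real.exp_pos _).le
  calc ∑ ω ∈ S, w ω ≤ ∑ ω ∈ S, Real.exp (-(s * a)) * (Real.exp (s * Y ω) * w ω) :=
        Finset.sum_le_sum key
    _ ≤ ∑ ω ∈ Finset.univ, Real.exp (-(s * a)) * (Real.exp (s * Y ω) * w ω) := by
        apply Finset.sum_le_sum_of_subset_of_nonneg (Finset.subset_univ S)
        intro ω _ _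
        have := hw ω
        positivity
    _ = Real.exp (-(s * a)) * ∑ ω, Real.exp (s * Y ω) * w ω := by
        rw [Finset.mul_sum]
    _ = Real.exp (-(s * a)) * (1 - q + q * Real.exp s) ^ n := by rw [hmgf s]
    _ ≤ Real.exp (-(s * a)) * (Real.exp (q * s + s ^ 2 / 8)) ^ n := by
        apply mul_le_mul_of_nonneg_left _ (Real.exp_pos _).le
        apply pow_le_pow_left₀ _ (hoeff_pt q s hq0 hq1 hs0)
        nlinarith [Real.exp_pos s, Real.one_le_exp hs0]
    _ = Real.exp (-(s * a) + (n : ℝ) * (q * s + s ^ 2 / 8)) := by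
        rw [← Real.exp_nat_mul, ← Real.exp_add]
    _ = Real.exp (-2 * lam ^ 2) := by
        congr 1
        have h1 : s * Real.sqrt n = 4 * lam := by
          rw [hs_def]; field_simp
        have h2 : (Real.sqrt n) ^ 2 = (n : ℝ) := Real.sq_sqrt hnn.le
        have h3 : (n : ℝ) * s ^ 2 = 16 * lam ^ 2 := by
          calc (n : ℝ) * s ^ 2 = (s * Real.sqrt n) ^ 2 := by rw [mul_pow, h2]; ring
            _ = 16 * lam ^ 2 := by rw [h1]; ring
        rw [ha_def]
        linear_combination (-lam) * h1 + (1/8) * h3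


lemma mgf_aux (n k : ℕ) (p : Fin k → ℝ) (hp1 : ∑ i, p i = 1) (A : Finset (Fin k)) (s : ℝ) :
    ∑ ω : Fin n → Fin k,
        Real.exp (s * ((Finset.univ.filter (fun t => ω t ∈ A)).card : ℝ)) * ∏ t, p (ω t)
      = (1 - (∑ i ∈ A, p i) + (∑ i ∈ A, p i) * Real.exp s) ^ n := by
  set q : ℝ := ∑ i ∈ A, p i with hq
  set f : Fin k → ℝ := fun j => Real.exp (s * (if j ∈ A then (1:ℝ) else 0)) * p j with hf
  have step1 : ∀ ω : Fin n → Fin k,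
      Real.exp (s * ((Finset.univ.filter (fun t => ω t ∈ A)).card : ℝ)) * ∏ t, p (ω t)
        = ∏ t, f (ω t) := by
    intro ω
    have hcard : ((Finset.univ.filter (fun t => ω t ∈ A)).card : ℝ)
        = ∑ t, if ω t ∈ A then (1:ℝ) else 0 := by
      rw [Finset.card_filter]; push_cast; rfl
    rw [hcard, Finset.mul_sum, Real.exp_sum, ← Finset.prod_mul_distrib]
  simp_rw [step1]
  have step2 : ∑ ω : Fin n → Fin k, ∏ t, f (ω t) = (∑ j, f j) ^ n := by
    rw [← Fintype.piFinset_univ, ← Finset.prod_univ_sum]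
    rw [Finset.prod_const, Finset.card_univ, Fintype.card_fin]
  rw [step2]
  have step3 : ∑ j, f j = 1 - q + q * Real.exp s := by
    rw [← Finset.sum_add_sum_compl A f]
    have h1 : ∑ j ∈ A, f j = Real.exp s * q := by
      rw [hq, Finset.mul_sum]
      refine Finset.sum_congr rfl fun j hj => ?_
      simp [hf, if_pos hj]
    have h2 : ∑ j ∈ Aᶜ, f j = ∑ j ∈ Aᶜ, p j := by
      refine Finset.sum_congr rfl fun j hj => ?_
      rw [Finset.mem_compl] at hj
      simp [hf, if_neg hj]
    have h3 : ∑ j ∈ A, p j + ∑ j ∈ Aᶜ, p j = 1 := by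
      rw [Finset.sum_add_sum_compl, hp1]
    rw [h1, h2]
    have : ∑ j ∈ Aᶜ, p j = 1 - q := by rw [hq] at *; linarith
    rw [this]; ring
  rw [step3]

/-- Bretagnolle–Huber–Carol inequality, with the multinomial law represented by
`n` i.i.d. draws `ω : Fin n → Fin k` from the categorical distribution `p`,
so that `X_i` is the number of draws equal to `i`. -/
theorem bretagnolle_huber_carol (n k : ℕ) (hn : 0 < n) (hk : 0 < k)
    (p : Fin k → ℝ) (hp0 : ∀ i, 0 ≤ p i) (hp1 : ∑ i, p i = 1)
    (lam : ℝ) (hlam : 0 < lam) :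
    ∑ ω ∈ Finset.univ.filter (fun ω : Fin n → Fin k =>
        2 * lam * Real.sqrt n ≤
          ∑ i, |((Finset.univ.filter (fun t => ω t = i)).card : ℝ) - n * p i|),
      ∏ t, p (ω t)
    ≤ 2 ^ k * Real.exp (-2 * lam ^ 2) := by
  have hw : ∀ ω : Fin n → Fin k, 0 ≤ ∏ t, p (ω t) :=
    fun ω => Finset.prod_nonneg fun t _ => hp0 _
  set d : (Fin n → Fin k) → Fin k → ℝ :=
    fun ω i => ((Finset.univ.filter (fun t => ω t = i)).card : ℝ) - (n : ℝ) * p i with hd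
  have hcard : ∀ (ω : Fin n → Fin k) i,
      ((Finset.univ.filter (fun t => ω t = i)).card : ℝ) = ∑ t, if ω t = i then (1:ℝ) else 0 := by
    intro ω i; rw [Finset.card_filter]; push_cast; rfl
  have hzero : ∀ ω : Fin n → Fin k, ∑ i, d ω i = 0 := by
    intro ω
    have hcount : ∑ i, ((Finset.univ.filter (fun t => ω t = i)).card : ℝ) = n := by
      simp_rw [hcard ω]
      rw [Finset.sum_comm]
      have h1 : ∀ t, (∑ i, if ω t = i then (1:ℝ) else 0) = 1 := by
        intro t; rw [Finset.sum_ite_eq]; simp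
      simp_rw [h1]
      simp
    simp only [hd]
    rw [Finset.sum_sub_distrib, hcount, ← Finset.mul_sum, hp1, mul_one, sub_self]
  set cond : Finset (Fin k) → (Fin n → Fin k) → Prop :=
    fun A ω => lam * Real.sqrt n ≤ ∑ i ∈ A, d ω i with hcond
  set E : Finset (Fin n → Fin k) := Finset.univ.filter (fun ω : Fin n → Fin k =>
        2 * lam * Real.sqrt n ≤
          ∑ i, |((Finset.univ.filter (fun t => ω t = i)).card : ℝ) - n * p i|) with hE
  calc ∑ ω ∈ E, ∏ t, p (ω t)
      ≤ ∑ ω ∈ E, ∑ A : Finset (Fin k), (if cond A ω then ∏ t, p (ω t) else 0) := by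
        refine Finset.sum_le_sum fun ω hω => ?_
        set A0 : Finset (Fin k) := Finset.univ.filter (fun i => 0 ≤ d ω i) with hA0
        have hωE : 2 * lam * Real.sqrt n ≤ ∑ i, |d ω i| := by
          rw [hE] at hω
          exact (Finset.mem_filter.mp hω).2
        have habs : ∑ i, |d ω i| = 2 * ∑ i ∈ A0, d ω i := by
          have h1 := Finset.sum_filter_add_sum_filter_not Finset.univ
            (fun i => 0 ≤ d ω i) (fun i => |d ω i|)
          have h2 : ∑ i ∈ Finset.univ.filter (fun i => 0 ≤ d ω i), |d ω i|
              = ∑ i ∈ A0, d ω i := by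
            refine Finset.sum_congr rfl fun i hi => abs_of_nonneg ?_
            exact (Finset.mem_filter.mp hi).2
          have h3 : ∑ i ∈ Finset.univ.filter (fun i => ¬ 0 ≤ d ω i), |d ω i|
              = - ∑ i ∈ Finset.univ.filter (fun i => ¬ 0 ≤ d ω i), d ω i := by
            rw [← Finset.sum_neg_distrib]
            refine Finset.sum_congr rfl fun i hi => abs_of_neg ?_
            exact lt_of_not_ge (Finset.mem_filter.mp hi).2
          have h4 := Finset.sum_filter_add_sum_filter_not Finset.univ
            (fun i => 0 ≤ d ω i) (d ω)
          rw [hzero ω] at h4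
          rw [h2, h3] at h1
          have hA0' : ∑ i ∈ Finset.univ.filter (fun i => 0 ≤ d ω i), d ω i
              = ∑ i ∈ A0, d ω i := rfl
          rw [hA0'] at h4
          linarith
        have hcondA0 : cond A0 ω := by
          rw [hcond]
          have hsq : 0 ≤ Real.sqrt n := Real.sqrt_nonneg _
          nlinarith [hωE, habs]
        have : (if cond A0 ω then ∏ t, p (ω t) else 0) = ∏ t, p (ω t) := if_pos hcondA0
        calc ∏ t, p (ω t) = (if cond A0 ω then ∏ t, p (ω t) else 0) := this.symm
          _ ≤ ∑ A : Finset (Fin k), (if cond A ω then ∏ t, p (ω t) else 0) := by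
              refine Finset.single_le_sum (f := fun A => if cond A ω then ∏ t, p (ω t) else 0) (fun A _ => ?_) (Finset.mem_univ A0)
              split_ifs
              · exact hw ω
              · exact le_refl 0
    _ = ∑ A : Finset (Fin k), ∑ ω ∈ E, (if cond A ω then ∏ t, p (ω t) else 0) :=
        Finset.sum_comm
    _ ≤ ∑ A : Finset (Fin k), Real.exp (-2 * lam ^ 2) := by
        refine Finset.sum_le_sum fun A _ => ?_
        rw [← Finset.sum_filter]
        set q : ℝ := ∑ i ∈ A, p i with hq
        have hq0 : 0 ≤ q := Finset.sum_nonneg fun i _ => hp0 i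
        have hq1 : q ≤ 1 := by
          rw [hq, ← hp1]
          exact Finset.sum_le_sum_of_subset_of_nonneg (Finset.subset_univ A)
            (fun i _ _ => hp0 i)
        refine chernoff_core n hn lam q hlam hq0 hq1 _ hw
          (fun ω => ((Finset.univ.filter (fun t => ω t ∈ A)).card : ℝ))
          (fun s => mgf_aux n k p hp1 A s) _ ?_
        intro ω hω
        have hωc : cond A ω := (Finset.mem_filter.mp hω).2
        rw [hcond] at hωc
        have hYA : ∑ i ∈ A, ((Finset.univ.filter (fun t => ω t = i)).card : ℝ)
            = ((Finset.univ.filter (fun t => ω t ∈ A)).card : ℝ) := by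
          simp_rw [hcard ω]
          rw [Finset.sum_comm]
          have h1 : ∀ t, (∑ i ∈ A, if ω t = i then (1:ℝ) else 0)
              = if ω t ∈ A then (1:ℝ) else 0 := by
            intro t
            rw [Finset.sum_ite_eq]
          simp_rw [h1]
          rw [Finset.card_filter]
          push_cast
          rfl
        have hsum : ∑ i ∈ A, d ω i
            = ((Finset.univ.filter (fun t => ω t ∈ A)).card : ℝ) - (n : ℝ) * q := by
          simp only [hd]
          rw [Finset.sum_sub_distrib, hYA, hq, Finset.mul_sum]
        rw [hsum] at hωc
        linarith
    _ = 2 ^ k * Real.exp (-2 * lam ^ 2) := by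
        rw [Finset.sum_const, Finset.card_univ, Fintype.card_finset, Fintype.card_fin,
          nsmul_eq_mul]
        push_cast
        ring
end

section
/- (Main theorem on skill selection) Let $\rho^\star$ and finitely many distributions $\{\rho_z\}$ be probability distributions on a finite set of cardinality $k$. Define $z_\star = \arg\min_z d(\rho^\star,\rho_z)$, $\varepsilon = d(\rho^\star,\rho_{z_\star})$, $\delta = \min_{i\neq j} d(\rho_{z_i},\rho_{z_j})$, and assume $\Delta = \delta - 2\varepsilon > 0$. Draw $n$ i.i.d. samples from $\rho^\star$, form the empirical distribution $\widehat\rho$, and set $\widehat z = \arg\min_z d(\widehat\rho,\rho_z)$. Then $\Pr[\widehat z \neq z_\star] \le 2^k \exp(-n\Delta^2/2)$. -/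
open scoped BigOperators

attribute [local instance] Classical.propDecidable

/-- Total variation distance between distributions on a finite set. -/
noncomputable def tv {X : Type*} [Fintype X] (p q : X → ℝ) : ℝ :=
  (∑ x, |p x - q x|) / 2

/-- The empirical distribution of the sample `ω : Fin n → X`. -/
noncomputable def emp {X : Type*} [Fintype X] [DecidableEq X] (n : ℕ)
    (ω : Fin n → X) : X → ℝ :=
  fun x => ((Finset.univ.filter (fun i => ω i = x)).card : ℝ) / n

lemma tv_comm {X : Type*} [Fintype X] (p q : X → ℝ) : tv p q = tv q p := by
  unfold tv
  congr 1
  exact Finset.sum_congr rfl fun x _ => abs_sub_comm _ _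

lemma tv_triangle {X : Type*} [Fintype X] (p q r : X → ℝ) :
    tv p r ≤ tv p q + tv q r := by
  unfold tv
  have key : ∑ x, |p x - r x| ≤ ∑ x, (|p x - q x| + |q x - r x|) :=
    Finset.sum_le_sum fun x _ => abs_sub_le _ _ _
  rw [Finset.sum_add_distrib] at key
  linarith

lemma tv_eq_sub_on_subset {X : Type*} [Fintype X] (p q : X → ℝ)
    (h : ∑ x, p x = ∑ x, q x) :
    ∃ A : Finset X, tv p q = ∑ x ∈ A, (p x - q x) := by
  classical
  refine ⟨Finset.univ.filter (fun x => q x ≤ p x), ?_⟩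
  have h1 : ∑ x ∈ Finset.univ.filter (fun x => q x ≤ p x), |p x - q x|
      = ∑ x ∈ Finset.univ.filter (fun x => q x ≤ p x), (p x - q x) := by
    apply Finset.sum_congr rfl
    intro x hx
    rw [Finset.mem_filter] at hx
    exact abs_of_nonneg (by linarith [hx.2])
  have h2 : ∑ x ∈ Finset.univ.filter (fun x => ¬ q x ≤ p x), |p x - q x|
      = ∑ x ∈ Finset.univ.filter (fun x => ¬ q x ≤ p x), (q x - p x) := by
    apply Finset.sum_congr rfl
    intro x hx
    rw [Finset.mem_filter] at hx
    rw [abs_sub_comm]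
    exact abs_of_nonneg (by linarith [lt_of_not_ge hx.2])
  have hsplit := Finset.sum_filter_add_sum_filter_not Finset.univ (fun x => q x ≤ p x)
    (fun x => |p x - q x|)
  have hsplit2 := Finset.sum_filter_add_sum_filter_not Finset.univ (fun x => q x ≤ p x)
    (fun x => p x - q x)
  have hzero : ∑ x, (p x - q x) = 0 := by
    rw [Finset.sum_sub_distrib, h, sub_self]
  have hneg : ∑ x ∈ Finset.univ.filter (fun x => ¬ q x ≤ p x), (q x - p x)
      = - ∑ x ∈ Finset.univ.filter (fun x => ¬ q x ≤ p x), (p x - q x) := by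
    rw [← Finset.sum_neg_distrib]
    exact Finset.sum_congr rfl fun x _ => by ring
  unfold tv
  rw [← hsplit, h1, h2]
  rw [hzero] at hsplit2
  rw [hneg]
  linarith

lemma hoeffding_scalar (p : ℝ) (hp0 : 0 ≤ p) (hp1 : p ≤ 1) (t : ℝ) :
    1 - p + p * Real.exp t ≤ Real.exp (t * p + t ^ 2 / 8) := by
  have hu : ∀ s : ℝ, 0 < 1 - p + p * Real.exp s := by
    intro s
    rcases eq_or_lt_of_le hp0 with h | h
    · simp [← h]
    · nlinarith [mul_pos h (Real.exp_pos s), Real.exp_pos s]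
  set g : ℝ → ℝ := fun s => Real.log (1 - p + p * Real.exp s) - p * s - s ^ 2 / 8 with hg
  set G : ℝ → ℝ := fun s => p * Real.exp s / (1 - p + p * Real.exp s) - p - s / 4 with hG
  have hu' : ∀ s : ℝ, (1 - p + p * Real.exp s) ≠ 0 := fun s => ne_of_gt (hu s)
  have hder : ∀ s : ℝ, HasDerivAt (fun s : ℝ => 1 - p + p * Real.exp s) (p * Real.exp s) s := by
    intro s
    simpa using ((Real.hasDerivAt_exp s).const_mul p).const_add (1 - p)
  have hdg : ∀ s, HasDerivAt g (G s) s := by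
    intro s
    have h2 := (hder s).log (hu' s)
    have h3 : HasDerivAt (fun s : ℝ => p * s) p s := by
      simpa using (hasDerivAt_id s).const_mul p
    have h4 : HasDerivAt (fun s : ℝ => s ^ 2 / 8) (s / 4) s := by
      have := (hasDerivAt_pow 2 s).div_const 8
      norm_num at this
      exact this.congr_deriv (by ring)
    exact (h2.sub h3).sub h4
  have hdG : ∀ s, HasDerivAt G
      ((p * Real.exp s * (1 - p + p * Real.exp s) - p * Real.exp s * (p * Real.exp s)) /
        (1 - p + p * Real.exp s) ^ 2 - 1 / 4) s := by
    intro s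
    have h1 : HasDerivAt (fun s : ℝ => p * Real.exp s) (p * Real.exp s) s :=
      (Real.hasDerivAt_exp s).const_mul p
    have h2 := h1.div (hder s) (hu' s)
    have h3 : HasDerivAt (fun s : ℝ => p + s / 4) (1 / 4) s := by
      simpa using ((hasDerivAt_id s).div_const 4).const_add p
    have := h2.sub h3
    exact this.congr_of_eventuallyEq (Filter.Eventually.of_forall fun x => by
      simp only [hG, Pi.sub_apply, Pi.div_apply]; ring)
  have hGanti : Antitone G := by
    apply antitone_of_deriv_nonpos (fun s => (hdG s).differentiableAt)
    intro s
    rw [(hdG s).deriv]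
    have hus := hu s
    have he := Real.exp_pos s
    have key : p * Real.exp s * (1 - p + p * Real.exp s) - p * Real.exp s * (p * Real.exp s)
        ≤ (1 - p + p * Real.exp s) ^ 2 / 4 := by nlinarith [sq_nonneg (1 - p - p * Real.exp s)]
    have h0 : 0 < (1 - p + p * Real.exp s) ^ 2 := by positivity
    rw [sub_nonpos, div_le_iff₀ h0]
    nlinarith
  have hG0 : G 0 = 0 := by
    have : (1 : ℝ) - p + p * Real.exp 0 = 1 := by rw [Real.exp_zero]; ring
    simp [hG, this, Real.exp_zero]
  have hg0 : g 0 = 0 := by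
    have : (1 : ℝ) - p + p * Real.exp 0 = 1 := by rw [Real.exp_zero]; ring
    simp [hg, this]
  have hgle : g t ≤ 0 := by
    rcases le_total t 0 with h | h
    · have mono : MonotoneOn g (Set.Iic 0) := by
        apply monotoneOn_of_deriv_nonneg (convex_Iic 0)
          (fun s _ => (hdg s).differentiableAt.continuousAt.continuousWithinAt)
          (fun s _ => (hdg s).differentiableAt.differentiableWithinAt)
        intro s hs
        rw [(hdg s).deriv, ← hG0]
        exact hGanti (le_of_lt (by simpa using hs))
      simpa [hg0] using mono (Set.mem_Iic.mpr h) (Set.mem_Iic.mpr le_rfl) h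
    · have anti : AntitoneOn g (Set.Ici 0) := by
        apply antitoneOn_of_deriv_nonpos (convex_Ici 0)
          (fun s _ => (hdg s).differentiableAt.continuousAt.continuousWithinAt)
          (fun s _ => (hdg s).differentiableAt.differentiableWithinAt)
        intro s hs
        rw [(hdg s).deriv, ← hG0]
        exact hGanti (le_of_lt (by simpa using hs))
      simpa [hg0] using anti (Set.mem_Ici.mpr le_rfl) (Set.mem_Ici.mpr h) h
  have hlog : Real.log (1 - p + p * Real.exp t) ≤ t * p + t ^ 2 / 8 := by
    have := hgle
    simp only [hg] at this
    linarith
  calc 1 - p + p * Real.exp t = Real.exp (Real.log (1 - p + p * Real.exp t)) :=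
        (Real.exp_log (hu t)).symm
    _ ≤ _ := Real.exp_le_exp.mpr hlog

lemma emp_sum_eq {X : Type*} [Fintype X] [DecidableEq X] (n : ℕ) (hn : 0 < n)
    (ω : Fin n → X) : ∑ x, emp n ω x = 1 := by
  unfold emp
  rw [← Finset.sum_div]
  have key : ∑ x, ((Finset.univ.filter (fun i => ω i = x)).card : ℝ) = n := by
    norm_cast
    rw [← Finset.card_eq_sum_card_fiberwise (f := ω) (fun i _ => Finset.mem_univ (ω i))]
    simp
  rw [key]
  field_simp

lemma emp_sum_subset {X : Type*} [Fintype X] [DecidableEq X] (n : ℕ)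
    (ω : Fin n → X) (A : Finset X) :
    ∑ x ∈ A, emp n ω x = ((Finset.univ.filter (fun i => ω i ∈ A)).card : ℝ) / n := by
  unfold emp
  rw [← Finset.sum_div]
  congr 1
  norm_cast
  rw [Finset.card_eq_sum_card_fiberwise (f := ω) (s := Finset.univ.filter (fun i => ω i ∈ A)) (t := A)
    (fun i hi => (Finset.mem_filter.mp hi).2)]
  apply Finset.sum_congr rfl
  intro x hx
  congr 1
  ext i
  simp only [Finset.mem_filter, Finset.mem_univ, true_and]
  aesop

lemma chernoff_bound {X : Type*} [Fintype X] [DecidableEq X] (n : ℕ)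
    (w : X → ℝ) (hw : ∀ x, 0 ≤ w x) (hw1 : ∑ x, w x = 1)
    (A : Finset X) (a : ℝ) (ha : 0 < a) :
    ∑ ω ∈ Finset.univ.filter (fun ω : Fin n → X =>
        (∑ x ∈ A, w x + a) * n ≤ ((Finset.univ.filter (fun i => ω i ∈ A)).card : ℝ)),
      ∏ i, w (ω i) ≤ Real.exp (-2 * n * a ^ 2) := by
  classical
  set p : ℝ := ∑ x ∈ A, w x with hp
  set t : ℝ := 4 * a with ht
  have ht0 : 0 ≤ t := by positivity
  have hp0 : 0 ≤ p := Finset.sum_nonneg fun x _ => hw x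
  have hp1 : p ≤ 1 := by
    rw [← hw1]
    exact Finset.sum_le_sum_of_subset_of_nonneg (Finset.subset_univ A) fun x _ _ => hw x
  set χ : X → ℝ := fun x => if x ∈ A then 1 else 0 with hχ
  have hcard : ∀ ω : Fin n → X,
      ((Finset.univ.filter (fun i => ω i ∈ A)).card : ℝ) = ∑ i, χ (ω i) := by
    intro ω
    rw [Finset.card_filter]
    push_cast
    simp [hχ]
  have hprodnn : ∀ ω : Fin n → X, 0 ≤ ∏ i, w (ω i) :=
    fun ω => Finset.prod_nonneg fun i _ => hw (ω i)
  calc ∑ ω ∈ Finset.univ.filter (fun ω : Fin n → X =>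
        (p + a) * n ≤ ((Finset.univ.filter (fun i => ω i ∈ A)).card : ℝ)), ∏ i, w (ω i)
      ≤ ∑ ω ∈ Finset.univ.filter (fun ω : Fin n → X =>
        (p + a) * n ≤ ((Finset.univ.filter (fun i => ω i ∈ A)).card : ℝ)),
          Real.exp (t * (∑ i, χ (ω i)) - t * ((p + a) * n)) * ∏ i, w (ω i) := by
        apply Finset.sum_le_sum
        intro ω hω
        rw [Finset.mem_filter] at hω
        have h1 : (p + a) * n ≤ ∑ i, χ (ω i) := by rw [← hcard ω]; exact hω.2
        have : (1 : ℝ) ≤ Real.exp (t * (∑ i, χ (ω i)) - t * ((p + a) * n)) := by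
          apply Real.one_le_exp
          have := mul_le_mul_of_nonneg_left h1 ht0
          linarith
        nlinarith [hprodnn ω]
    _ ≤ ∑ ω : Fin n → X,
          Real.exp (t * (∑ i, χ (ω i)) - t * ((p + a) * n)) * ∏ i, w (ω i) := by
        apply Finset.sum_le_sum_of_subset_of_nonneg (Finset.filter_subset _ _)
        intro ω _ _
        exact mul_nonneg (Real.exp_pos _).le (hprodnn ω)
    _ = Real.exp (-(t * ((p + a) * n))) * ∑ ω : Fin n → X, ∏ i, (w (ω i) * Real.exp (t * χ (ω i))) := by
        rw [Finset.mul_sum]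
        apply Finset.sum_congr rfl
        intro ω _
        rw [Finset.prod_mul_distrib, ← Real.exp_sum, ← Finset.mul_sum, Real.exp_sub,
          Real.exp_neg]
        ring
    _ = Real.exp (-(t * ((p + a) * n))) * (∑ x, w x * Real.exp (t * χ x)) ^ n := by
        congr 1
        rw [Fintype.sum_pow]
    _ ≤ Real.exp (-(t * ((p + a) * n))) * (Real.exp (t * p + t ^ 2 / 8)) ^ n := by
        apply mul_le_mul_of_nonneg_left _ (Real.exp_pos _).le
        apply pow_le_pow_left₀
        · exact Finset.sum_nonneg fun x _ => mul_nonneg (hw x) (Real.exp_pos _).le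
        have hsplit : ∑ x, w x * Real.exp (t * χ x) = 1 - p + p * Real.exp t := by
          rw [← Finset.sum_filter_add_sum_filter_not Finset.univ (fun x => x ∈ A)]
          have e1 : ∑ x ∈ Finset.univ.filter (fun x => x ∈ A), w x * Real.exp (t * χ x)
              = p * Real.exp t := by
            rw [show Finset.univ.filter (fun x => x ∈ A) = A by simp, hp, Finset.sum_mul]
            apply Finset.sum_congr rfl
            intro x hx
            simp [hχ, hx]
          have e2 : ∑ x ∈ Finset.univ.filter (fun x => ¬ x ∈ A), w x * Real.exp (t * χ x)
              = 1 - p := by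
            have : ∑ x ∈ Finset.univ.filter (fun x => ¬ x ∈ A), w x * Real.exp (t * χ x)
                = ∑ x ∈ Finset.univ.filter (fun x => ¬ x ∈ A), w x := by
              apply Finset.sum_congr rfl
              intro x hx
              rw [Finset.mem_filter] at hx
              simp [hχ, hx.2]
            rw [this, hp]
            have := Finset.sum_filter_add_sum_filter_not Finset.univ (fun x => x ∈ A) w
            rw [show Finset.univ.filter (fun x => x ∈ A) = A by simp] at this
            linarith [hw1]
          rw [e1, e2]; ring
        rw [hsplit]
        exact hoeffding_scalar p hp0 hp1 t
    _ = Real.exp (n * (t * p + t ^ 2 / 8) - t * ((p + a) * n)) := by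
        rw [← Real.exp_nat_mul, ← Real.exp_add]
        ring_nf
    _ ≤ Real.exp (-2 * n * a ^ 2) := by
        apply Real.exp_le_exp.mpr
        rw [ht]
        ring_nf
        nlinarith [sq_nonneg a]

/-- Main skill-selection theorem: the probability (under `n` i.i.d. draws from
`ρstar`) that the greedy skill selector fails, i.e. that `zstar` is not the
unique minimizer of `z ↦ d(ρ̂, ρ_z)`, is at most `2^k * exp (-n Δ² / 2)` where
`Δ = δ - 2ε`. -/
theorem skill_selection_main {X Z : Type*} [Fintype X] [DecidableEq X]
    [Fintype Z] [Nontrivial Z]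
    (k : ℕ) (hk : Fintype.card X = k)
    (ρstar : X → ℝ) (hρstar : (∀ x, 0 ≤ ρstar x) ∧ ∑ x, ρstar x = 1)
    (ρ : Z → X → ℝ) (hρ : ∀ z, (∀ x, 0 ≤ ρ z x) ∧ ∑ x, ρ z x = 1)
    (zstar : Z) (hzstar : ∀ z, tv ρstar (ρ zstar) ≤ tv ρstar (ρ z))
    (ε δ : ℝ) (hε : ε = tv ρstar (ρ zstar))
    (hδ : IsLeast {r | ∃ i j : Z, i ≠ j ∧ r = tv (ρ i) (ρ j)} δ)
    (hΔ : 0 < δ - 2 * ε)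
    (n : ℕ) (hn : 0 < n) :
    ∑ ω ∈ Finset.univ.filter (fun ω : Fin n → X =>
        ∃ z, z ≠ zstar ∧ tv (emp n ω) (ρ z) ≤ tv (emp n ω) (ρ zstar)),
      ∏ i, ρstar (ω i)
    ≤ 2 ^ k * Real.exp (-(n * (δ - 2 * ε) ^ 2) / 2) := by
  obtain ⟨hρnn, hρ1⟩ := hρstar
  set a : ℝ := (δ - 2 * ε) / 2 with haa
  have ha : 0 < a := by rw [haa]; linarith
  set P : Finset X → (Fin n → X) → Prop := fun A ω =>
    (∑ x ∈ A, ρstar x + a) * n ≤ ((Finset.univ.filter (fun i => ω i ∈ A)).card : ℝ) with hP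
  have itenn : ∀ (A : Finset X) (ω : Fin n → X),
      0 ≤ if P A ω then ∏ i, ρstar (ω i) else 0 := by
    intro A ω
    split
    · exact Finset.prod_nonneg fun i _ => hρnn _
    · exact le_rfl
  have cover : ∀ ω ∈ Finset.univ.filter (fun ω : Fin n → X =>
      ∃ z, z ≠ zstar ∧ tv (emp n ω) (ρ z) ≤ tv (emp n ω) (ρ zstar)),
      ∃ A : Finset X, P A ω := by
    intro ω hω
    rw [Finset.mem_filter] at hω
    obtain ⟨-, z, hz, hle⟩ := hω
    have hδle : δ ≤ tv (ρ z) (ρ zstar) := hδ.2 ⟨z, zstar, hz, rfl⟩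
    have t1 : tv (ρ z) (ρ zstar) ≤ tv (ρ z) (emp n ω) + tv (emp n ω) (ρ zstar) :=
      tv_triangle _ _ _
    have t2 : tv (ρ z) (emp n ω) = tv (emp n ω) (ρ z) := tv_comm _ _
    have t3 : tv (emp n ω) (ρ zstar) ≤ tv (emp n ω) ρstar + tv ρstar (ρ zstar) :=
      tv_triangle _ _ _
    have hstep : a ≤ tv (emp n ω) ρstar := by
      rw [haa]
      rw [hε] at *
      linarith
    have hsum : ∑ x, emp n ω x = ∑ x, ρstar x := by rw [emp_sum_eq n hn ω, hρ1]
    obtain ⟨A, hA⟩ := tv_eq_sub_on_subset (emp n ω) ρstar hsum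
    refine ⟨A, ?_⟩
    rw [hA, Finset.sum_sub_distrib, emp_sum_subset n ω A] at hstep
    have hn' : (0 : ℝ) < n := by exact_mod_cast hn
    rw [hP]
    rw [le_sub_iff_add_le, le_div_iff₀ hn'] at hstep
    calc (∑ x ∈ A, ρstar x + a) * (n : ℝ)
        = (a + ∑ x ∈ A, ρstar x) * (n : ℝ) := by ring
      _ ≤ _ := hstep
  calc ∑ ω ∈ Finset.univ.filter (fun ω : Fin n → X =>
        ∃ z, z ≠ zstar ∧ tv (emp n ω) (ρ z) ≤ tv (emp n ω) (ρ zstar)),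
      ∏ i, ρstar (ω i)
      ≤ ∑ ω ∈ Finset.univ.filter (fun ω : Fin n → X =>
          ∃ z, z ≠ zstar ∧ tv (emp n ω) (ρ z) ≤ tv (emp n ω) (ρ zstar)),
          ∑ A : Finset X, (if P A ω then ∏ i, ρstar (ω i) else 0) := by
        apply Finset.sum_le_sum
        intro ω hω
        obtain ⟨A₀, hA₀⟩ := cover ω hω
        have key := Finset.single_le_sum (fun A _ => itenn A ω) (Finset.mem_univ A₀)
        rw [if_pos hA₀] at key
        exact key
    _ ≤ ∑ ω : Fin n → X, ∑ A : Finset X, (if P A ω then ∏ i, ρstar (ω i) else 0) :=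
        Finset.sum_le_sum_of_subset_of_nonneg (Finset.filter_subset _ _)
          (fun ω _ _ => Finset.sum_nonneg fun A _ => itenn A ω)
    _ = ∑ A : Finset X, ∑ ω : Fin n → X, (if P A ω then ∏ i, ρstar (ω i) else 0) :=
        Finset.sum_comm
    _ = ∑ A : Finset X, ∑ ω ∈ Finset.univ.filter (P A), ∏ i, ρstar (ω i) := by
        apply Finset.sum_congr rfl
        intro A _
        rw [Finset.sum_filter]
    _ ≤ ∑ _A : Finset X, Real.exp (-2 * n * a ^ 2) := by
        apply Finset.sum_le_sum
        intro A _
        simp only [hP]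
        exact chernoff_bound n ρstar hρnn hρ1 A a ha
    _ = 2 ^ k * Real.exp (-(n * (δ - 2 * ε) ^ 2) / 2) := by
        rw [Finset.sum_const, Finset.card_univ, Fintype.card_finset, hk, nsmul_eq_mul]
        congr 1
        · push_cast
          ring
        · congr 1
          rw [haa]
          ring
end
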